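/- Let Φ = {φ_i}_{i∈Λ} be a similarity IFS and let S ∈ 𝒯'_Λ be an infinite tree with no leaves. Then for every miniset M ⊆ Q of Γ_Φ(S) such that M ∩ Q° ≠ ∅, there exist a non-empty set F ∈ S_Φ^S and a similarity map ψ such that ψ(F) ⊆ M ∩ Q°; in particular dim_H(F) ≤ dim_H(M). -/

import Mathlib

open Metric Filter Set
open scoped ENNReal NNReal

noncomputable section

abbrev Euc (d : ℕ) : Type := EuclideanSpace ℝ (Fin d)

/-- `f : ℝ^d → ℝ^d` is a similarity with scaling ratio `r`. -/
def IsSimilarityWithRatio {d : ℕ} (f : Euc d → Euc d) (r : ℝ) : Prop :=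
  ∀ x y : Euc d, dist (f x) (f y) = r * dist x y

/-- `f` is a similarity map (with some positive scaling ratio). -/
def IsSimilarity {d : ℕ} (f : Euc d → Euc d) : Prop :=
  ∃ r : ℝ, 0 < r ∧ IsSimilarityWithRatio f r

/-- `f` is an expanding similarity map (scaling ratio `≥ 1`). -/
def IsExpandingSimilarity {d : ℕ} (f : Euc d → Euc d) : Prop :=
  ∃ r : ℝ, 1 ≤ r ∧ IsSimilarityWithRatio f r

/-- `f` is a contracting similarity map with ratio `r ∈ (0,1)`. -/
def IsContractingSimilarity {d : ℕ} (f : Euc d → Euc d) (r : ℝ) : Prop :=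
  0 < r ∧ r < 1 ∧ IsSimilarityWithRatio f r

/-- The closed unit cube `Q = [0,1]^d`. -/
def unitCube (d : ℕ) : Set (Euc d) := {x | ∀ i, x i ∈ Set.Icc (0:ℝ) 1}

/-- A miniset of `F`: a non-empty set of the form `Q ∩ ψ(F)` with `ψ` an expanding similarity. -/
def IsMiniset {d : ℕ} (F M : Set (Euc d)) : Prop :=
  M.Nonempty ∧ ∃ ψ : Euc d → Euc d, IsExpandingSimilarity ψ ∧ M = unitCube d ∩ ψ '' F

/-- A microset of `F`: a limit of minisets of `F` in the Hausdorff metric. -/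
def IsMicroset {d : ℕ} (F M : Set (Euc d)) : Prop :=
  IsCompact M ∧ M.Nonempty ∧ ∃ A : ℕ → Set (Euc d), (∀ n, IsMiniset F (A n)) ∧
    Tendsto (fun n => hausdorffDist (A n) M) atTop (nhds 0)

/-- A tree with alphabet `Λ`: a prefix-closed set of finite words containing the empty word. -/
def IsTree {Λ : Type} (T : Set (List Λ)) : Prop :=
  ([] : List Λ) ∈ T ∧ ∀ w ∈ T, ∀ v : List Λ, v <+: w → v ∈ T

/-- Every word of `T` has a one-letter extension in `T`. -/
def HasNoLeaves {Λ : Type} (T : Set (List Λ)) : Prop :=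
  ∀ w ∈ T, ∃ a : Λ, w ++ [a] ∈ T

/-- The boundary `∂T` of a tree: infinite words all of whose finite prefixes lie in `T`. -/
def treeBoundary {Λ : Type} (T : Set (List Λ)) : Set (ℕ → Λ) :=
  {x | ∀ n : ℕ, (List.ofFn fun i : Fin n => x i) ∈ T}

/-- The descendant tree `T^v = {w : vw ∈ T}`. -/
def descTree {Λ : Type} (T : Set (List Λ)) (v : List Λ) : Set (List Λ) :=
  {w | v ++ w ∈ T}

/-- The composition `φ_w = φ_{w₁} ∘ ⋯ ∘ φ_{w_k}` for a finite word `w`. -/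
def wordMap {X : Type} {Λ : Type} (Φ : Λ → X → X) (w : List Λ) : X → X :=
  fun z => w.foldr (fun a y => Φ a y) z

/-- The coding map `γ_Φ(i) = lim_n φ_{i₁} ∘ ⋯ ∘ φ_{iₙ}(0)`. -/
def codeMap {d : ℕ} {Λ : Type} (Φ : Λ → Euc d → Euc d) (x : ℕ → Λ) : Euc d :=
  limUnder atTop (fun n => wordMap Φ (List.ofFn fun i : Fin n => x i) 0)

/-- `Γ_Φ(T) = γ_Φ(∂T)`. -/
def treeProj {d : ℕ} {Λ : Type} (Φ : Λ → Euc d → Euc d) (T : Set (List Λ)) : Set (Euc d) :=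
  codeMap Φ '' treeBoundary T

/-- The collection `S_Φ^T = {Γ_Φ(T^v) : v ∈ T}`. -/
def branchSets {d : ℕ} {Λ : Type} (Φ : Λ → Euc d → Euc d) (T : Set (List Λ)) :
    Set (Set (Euc d)) :=
  {A | ∃ v ∈ T, A = treeProj Φ (descTree T v)}

/-- `A` belongs to the closure of `S_Φ^T` in the Hausdorff metric: `A` is a non-empty compact
set which is a Hausdorff-metric limit of a sequence of sets `Γ_Φ(T^{vₙ})`, `vₙ ∈ T`. -/
def inClosureBranchSets {d : ℕ} {Λ : Type} (Φ : Λ → Euc d → Euc d) (T : Set (List Λ))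
    (A : Set (Euc d)) : Prop :=
  IsCompact A ∧ A.Nonempty ∧ ∃ v : ℕ → List Λ, (∀ n, v n ∈ T) ∧
    Tendsto (fun n => hausdorffDist (treeProj Φ (descTree T (v n))) A) atTop (nhds 0)

/-- The scaling ratio `r_w = r_{w₁} ⋯ r_{w_k}` of a word. -/
def wordRatio {Λ : Type} (r : Λ → ℝ) (w : List Λ) : ℝ := (w.map r).prod

/-- The section `Π_ρ = {w : r_w ≤ ρ < r_{w₁⋯w_{|w|-1}}}`. -/
def sectionPi {Λ : Type} (r : Λ → ℝ) (ρ : ℝ) : Set (List Λ) :=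
  {w | wordRatio r w ≤ ρ ∧ ρ < wordRatio r w.dropLast}

/-- `r_min = min_{i ∈ Λ} r_i`. -/
def rMin {Λ : Type} [Fintype Λ] [Nonempty Λ] (r : Λ → ℝ) : ℝ :=
  Finset.univ.inf' Finset.univ_nonempty r

/-- The weak separation condition: there is `c ∈ ℕ` such that for every `ρ ∈ (0, r_min)`,
every closed ball of radius `ρ` intersects at most `c` distinct sets among
`{φ_w(K) : w ∈ Π_ρ}` (identical sets counted once). -/
def SatisfiesWSC {d : ℕ} {Λ : Type} [Fintype Λ] [Nonempty Λ] (Φ : Λ → Euc d → Euc d)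
    (r : Λ → ℝ) (K : Set (Euc d)) : Prop :=
  ∃ c : ℕ, ∀ ρ : ℝ, 0 < ρ → ρ < rMin r → ∀ x : Euc d,
    ∃ V : Finset (Set (Euc d)), V.card ≤ c ∧
      ∀ w ∈ sectionPi r ρ, (wordMap Φ w '' K ∩ closedBall x ρ).Nonempty →
        wordMap Φ w '' K ∈ V

/-- The strong separation condition. -/
def SatisfiesSSC {d : ℕ} {Λ : Type} (Φ : Λ → Euc d → Euc d) (K : Set (Euc d)) : Prop :=
  ∀ i j : Λ, i ≠ j → (Φ i '' K) ∩ (Φ j '' K) = ∅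

/-- `U` is an OSC set for `Φ`. -/
def IsOSCSet {d : ℕ} {Λ : Type} (Φ : Λ → Euc d → Euc d) (U : Set (Euc d)) : Prop :=
  U.Nonempty ∧ IsOpen U ∧ (∀ i, Φ i '' U ⊆ U) ∧
    ∀ i j : Λ, i ≠ j → (Φ i '' U) ∩ (Φ j '' U) = ∅

/-- The open set condition. -/
def SatisfiesOSC {d : ℕ} {Λ : Type} (Φ : Λ → Euc d → Euc d) : Prop :=
  ∃ U : Set (Euc d), IsOSCSet Φ U

/-- `K` is the attractor of the IFS `Φ`. -/
def IsAttractor {d : ℕ} {Λ : Type} (Φ : Λ → Euc d → Euc d) (K : Set (Euc d)) : Prop :=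
  IsCompact K ∧ K.Nonempty ∧ K = ⋃ i : Λ, Φ i '' K
/-!
A point of `M` in the open cube is `ψ(γ(x))` for some `x ∈ ∂S`. The cylinder `φ_{x|n}(γ(Λ^ℕ))`
has diameter at most `r_max^n · diam γ(Λ^ℕ)`, so for large `n` the similarity `ψ ∘ φ_{x|n}`
maps `Γ_Φ(S^{x|n})` into a small ball around `ψ(γ(x))` inside `Q°`, and also into `ψ(Γ_Φ(S))`
because `γ(vy) = φ_v(γ(y))`. Similarities are bi-Lipschitz, so they preserve Hausdorff
dimension.
-/

open Topology

theorem Stream'.take_eq_ofFn {α : Type} (x : Stream' α) (n : ℕ) :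
    x.take n = List.ofFn fun i : Fin n => x i :=
  List.ext_getElem (by simp) fun _ _ _ => by simp; rfl

namespace TreeIFS

variable {d : ℕ} {Λ : Type}

theorem mem_treeBoundary {T : Set (List Λ)} {x : Stream' Λ} :
    x ∈ treeBoundary T ↔ ∀ n, x.take n ∈ T := by
  simp only [treeBoundary, Stream'.take_eq_ofFn]; rfl

theorem wordMap_append {X : Type} (Φ : Λ → X → X) (v w : List Λ) (z : X) :
    wordMap Φ (v ++ w) z = wordMap Φ v (wordMap Φ w z) := by
  simp [wordMap, List.foldr_append]

section Similarity

variable {f g : Euc d → Euc d} {r s : ℝ}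

theorem IsSimilarityWithRatio.comp (hf : IsSimilarityWithRatio f r)
    (hg : IsSimilarityWithRatio g s) : IsSimilarityWithRatio (f ∘ g) (r * s) := fun x y => by
  simp only [Function.comp, hf (g x), hg x y, mul_assoc]

theorem IsSimilarityWithRatio.continuous (hf : IsSimilarityWithRatio f r) (hr : 0 ≤ r) :
    Continuous f :=
  (LipschitzWith.of_dist_le_mul (K := ⟨r, hr⟩) fun x y => (hf x y).le).continuous

theorem IsSimilarityWithRatio.mapsTo_ball (hf : IsSimilarityWithRatio f r) (hr : 0 < r)
    (x : Euc d) (ε : ℝ) : MapsTo f (ball x (ε / r)) (ball (f x) ε) := fun y hy => by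
  rw [mem_ball, hf, ← lt_div_iff₀' hr]
  exact hy

theorem IsSimilarity.le_dimH_image (hf : IsSimilarity f) (A : Set (Euc d)) :
    dimH A ≤ dimH (f '' A) := by
  obtain ⟨r, hr, hf⟩ := hf
  refine (AntilipschitzWith.of_le_mul_dist (K := (Real.toNNReal r)⁻¹) fun x y => ?_).le_dimH_image A
  rw [hf, NNReal.coe_inv, Real.coe_toNNReal _ hr.le, inv_mul_cancel_left₀ hr.ne']

end Similarity

section WordMap

variable {Φ : Λ → Euc d → Euc d} {r : Λ → ℝ}

theorem isSimilarityWithRatio_wordMap (hΦ : ∀ i, IsSimilarityWithRatio (Φ i) (r i))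
    (w : List Λ) : IsSimilarityWithRatio (wordMap Φ w) (wordRatio r w) := by
  induction w with
  | nil => simp [IsSimilarityWithRatio, wordMap, wordRatio]
  | cons a w ih =>
    have h : IsSimilarityWithRatio (wordMap Φ (a :: w)) _ :=
      IsSimilarityWithRatio.comp (hΦ a) ih
    simpa [wordRatio] using h

theorem wordRatio_pos (hr : ∀ i, 0 < r i) (w : List Λ) : 0 < wordRatio r w :=
  List.prod_pos fun _ h => by
    obtain ⟨i, -, rfl⟩ := List.mem_map.1 h
    exact hr i

theorem wordRatio_nonneg (hr : ∀ i, 0 ≤ r i) (w : List Λ) : 0 ≤ wordRatio r w :=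
  List.prod_nonneg fun _ h => by
    obtain ⟨i, -, rfl⟩ := List.mem_map.1 h
    exact hr i

theorem wordRatio_le_pow {ρ : ℝ} (hr : ∀ i, 0 ≤ r i) (hρ : ∀ i, r i ≤ ρ) (w : List Λ) :
    wordRatio r w ≤ ρ ^ w.length := by
  induction w with
  | nil => simp [wordRatio]
  | cons a w ih =>
    simp only [wordRatio, List.map_cons, List.prod_cons, List.length_cons, pow_succ'] at ih ⊢
    exact mul_le_mul (hρ a) ih (wordRatio_nonneg hr w) ((hr a).trans (hρ a))

theorem dist_wordMap_take_succ_le (hΦ : ∀ i, IsSimilarityWithRatio (Φ i) (r i))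
    (hr : ∀ i, 0 ≤ r i) {ρ C : ℝ} (hρ : ∀ i, r i ≤ ρ) (hC : ∀ i, dist (Φ i 0) 0 ≤ C)
    (x : Stream' Λ) (n : ℕ) :
    dist (wordMap Φ (x.take n) 0) (wordMap Φ (x.take (n + 1)) 0) ≤ C * ρ ^ n := by
  rw [Stream'.take_succ', wordMap_append, isSimilarityWithRatio_wordMap hΦ, dist_comm 0, mul_comm]
  have hn := wordRatio_le_pow hr hρ (x.take n)
  rw [Stream'.length_take] at hn
  exact mul_le_mul (hC _) hn (wordRatio_nonneg hr _) (dist_nonneg.trans (hC (x 0)))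

end WordMap

section CodeMap

variable [Finite Λ] [Nonempty Λ] {Φ : Λ → Euc d → Euc d} {r : Λ → ℝ}

theorem exists_geometric_bound_wordMap_take (hΦ : ∀ i, IsContractingSimilarity (Φ i) (r i)) :
    ∃ C ρ : ℝ, ρ < 1 ∧ ∀ (x : Stream' Λ) (n : ℕ),
      dist (wordMap Φ (x.take n) 0) (wordMap Φ (x.take (n + 1)) 0) ≤ C * ρ ^ n := by
  obtain ⟨i₀, hi₀⟩ := Finite.exists_max r
  obtain ⟨j₀, hj₀⟩ := Finite.exists_max fun i => dist (Φ i 0) 0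
  exact ⟨_, _, (hΦ i₀).2.1, dist_wordMap_take_succ_le (fun i => (hΦ i).2.2)
    (fun i => (hΦ i).1.le) hi₀ hj₀⟩

theorem tendsto_codeMap (hΦ : ∀ i, IsContractingSimilarity (Φ i) (r i)) (x : Stream' Λ) :
    Tendsto (fun n => wordMap Φ (x.take n) 0) atTop (𝓝 (codeMap Φ x)) := by
  obtain ⟨C, ρ, hρ, hC⟩ := exists_geometric_bound_wordMap_take hΦ
  simp only [codeMap, ← Stream'.take_eq_ofFn]
  exact tendsto_nhds_limUnder (cauchySeq_tendsto_of_complete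
    (cauchySeq_of_le_geometric ρ C hρ (hC x)))

theorem isBounded_range_codeMap (hΦ : ∀ i, IsContractingSimilarity (Φ i) (r i)) :
    Bornology.IsBounded (range (codeMap Φ)) := by
  obtain ⟨C, ρ, hρ, hC⟩ := exists_geometric_bound_wordMap_take hΦ
  refine (isBounded_closedBall (x := 0) (r := C / (1 - ρ))).subset ?_
  rintro _ ⟨x, rfl⟩
  rw [mem_closedBall, dist_comm]
  exact dist_le_of_le_geometric_of_tendsto₀ ρ C hρ (hC x) (tendsto_codeMap hΦ x)

theorem codeMap_appendStream (hΦ : ∀ i, IsContractingSimilarity (Φ i) (r i))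
    (v : List Λ) (y : Stream' Λ) : codeMap Φ (v ++ₛ y) = wordMap Φ v (codeMap Φ y) := by
  have hv : Continuous (wordMap Φ v) := IsSimilarityWithRatio.continuous
    (isSimilarityWithRatio_wordMap (fun i => (hΦ i).2.2) v) (wordRatio_pos (fun i => (hΦ i).1) v).le
  refine tendsto_nhds_unique ?_ ((hv.tendsto _).comp (tendsto_codeMap hΦ y))
  refine ((tendsto_codeMap hΦ (v ++ₛ y)).comp (tendsto_add_atTop_nat v.length)).congr
    fun n => ?_
  rw [Function.comp_apply, add_comm, ← Stream'.append_take, wordMap_append]; rfl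

theorem exists_wordMap_take_image_subset_ball (hΦ : ∀ i, IsContractingSimilarity (Φ i) (r i))
    (x : Stream' Λ) {ε : ℝ} (hε : 0 < ε) :
    ∃ n, wordMap Φ (x.take n) '' range (codeMap Φ) ⊆ ball (codeMap Φ x) ε := by
  obtain ⟨D, hD⟩ := Metric.isBounded_iff.1 (isBounded_range_codeMap hΦ)
  obtain ⟨i₀, hi₀⟩ := Finite.exists_max r
  have hsmall : Tendsto (fun n => (r i₀) ^ n * D) atTop (𝓝 0) := by
    simpa using (tendsto_pow_atTop_nhds_zero_of_lt_one (hΦ i₀).1.le (hΦ i₀).2.1).mul_const D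
  obtain ⟨n, hn⟩ := (hsmall.eventually (gt_mem_nhds hε)).exists
  refine ⟨n, ?_⟩
  rintro _ ⟨_, ⟨y, rfl⟩, rfl⟩
  have hx : codeMap Φ x = wordMap Φ (x.take n) (codeMap Φ (x.drop n)) := by
    rw [← codeMap_appendStream hΦ, Stream'.append_take_drop]
  have hratio := wordRatio_le_pow (fun i => (hΦ i).1.le) hi₀ (x.take n)
  rw [Stream'.length_take] at hratio
  rw [mem_ball, hx, isSimilarityWithRatio_wordMap (fun i => (hΦ i).2.2)]
  calc wordRatio r (x.take n) * dist (codeMap Φ y) (codeMap Φ (x.drop n))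
      ≤ r i₀ ^ n * D := mul_le_mul hratio (hD ⟨y, rfl⟩ ⟨_, rfl⟩) dist_nonneg
        (pow_nonneg (hΦ i₀).1.le n)
    _ < ε := hn

end CodeMap

section Tree

variable {T : Set (List Λ)} {v : List Λ} {y : Stream' Λ}

theorem mem_treeBoundary_descTree_of_appendStream (h : v ++ₛ y ∈ treeBoundary T) :
    y ∈ treeBoundary (descTree T v) :=
  mem_treeBoundary.2 fun n => by
    simpa only [descTree, mem_ofPred_eq, Stream'.append_take] using mem_treeBoundary.1 h _

theorem appendStream_mem_treeBoundary (hT : IsTree T)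
    (hy : y ∈ treeBoundary (descTree T v)) : v ++ₛ y ∈ treeBoundary T := by
  have hy' : ∀ n, v ++ y.take n ∈ T := mem_treeBoundary.1 hy
  refine mem_treeBoundary.2 fun k => ?_
  rcases le_or_gt k v.length with hk | hk
  · rw [Stream'.take_append_of_le_length k v y hk]
    exact hT.2 v (by simpa using hy' 0) _ (List.take_prefix k v)
  · obtain ⟨n, rfl⟩ := Nat.exists_eq_add_of_lt hk
    rw [add_assoc, ← Stream'.append_take]
    exact hy' _

theorem treeProj_descTree_take_nonempty {Φ : Λ → Euc d → Euc d} {x : Stream' Λ}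
    (hx : x ∈ treeBoundary T) (n : ℕ) : (treeProj Φ (descTree T (x.take n))).Nonempty :=
  ⟨_, x.drop n, mem_treeBoundary_descTree_of_appendStream (by rwa [Stream'.append_take_drop]),
    rfl⟩

end Tree

variable [Finite Λ] [Nonempty Λ] {Φ : Λ → Euc d → Euc d} {r : Λ → ℝ} {T : Set (List Λ)}

theorem image_treeProj_descTree_subset (hΦ : ∀ i, IsContractingSimilarity (Φ i) (r i))
    (hT : IsTree T) (v : List Λ) :
    wordMap Φ v '' treeProj Φ (descTree T v) ⊆ treeProj Φ T := by
  rintro _ ⟨_, ⟨y, hy, rfl⟩, rfl⟩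
  exact ⟨v ++ₛ y, appendStream_mem_treeBoundary hT hy, codeMap_appendStream hΦ v y⟩

end TreeIFS

open TreeIFS in
theorem stmt13_general {d : ℕ} {Λ : Type} [Fintype Λ] [Nonempty Λ]
    (Φ : Λ → Euc d → Euc d) (r : Λ → ℝ)
    (hΦ : ∀ i, IsContractingSimilarity (Φ i) (r i))
    (S : Set (List Λ)) (hS : IsTree S) :
    ∀ M : Set (Euc d), IsMiniset (treeProj Φ S) M →
      (M ∩ interior (unitCube d)).Nonempty →
      ∃ F : Set (Euc d), F ∈ branchSets Φ S ∧ F.Nonempty ∧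
        (∃ ψ : Euc d → Euc d, IsSimilarity ψ ∧ ψ '' F ⊆ M ∩ interior (unitCube d)) ∧
        dimH F ≤ dimH M := by
  rintro M ⟨-, ψ, ⟨R, hR, hψ⟩, rfl⟩ ⟨_, ⟨-, _, ⟨x, hx, rfl⟩, rfl⟩, hp⟩
  have hR0 : 0 < R := zero_lt_one.trans_le hR
  obtain ⟨ε, hε, hball⟩ := Metric.isOpen_iff.1 isOpen_interior _ hp
  obtain ⟨n, hn⟩ := exists_wordMap_take_image_subset_ball hΦ x (div_pos hε hR0)
  set v := Stream'.take n x
  have hsim : IsSimilarity (ψ ∘ wordMap Φ v) :=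
    ⟨_, mul_pos hR0 (wordRatio_pos (fun i => (hΦ i).1) v),
      IsSimilarityWithRatio.comp hψ (isSimilarityWithRatio_wordMap (fun i => (hΦ i).2.2) v)⟩
  have hsub : (ψ ∘ wordMap Φ v) '' treeProj Φ (descTree S v) ⊆
      unitCube d ∩ ψ '' treeProj Φ S ∩ interior (unitCube d) := by
    rintro _ ⟨z, hz, rfl⟩
    have hint : ψ (wordMap Φ v z) ∈ interior (unitCube d) :=
      hball (IsSimilarityWithRatio.mapsTo_ball hψ hR0 _ ε
        (hn ⟨z, image_subset_range _ _ hz, rfl⟩))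
    exact ⟨⟨interior_subset hint,
      mem_image_of_mem ψ (image_treeProj_descTree_subset hΦ hS v ⟨z, hz, rfl⟩)⟩, hint⟩
  exact ⟨_, ⟨v, mem_treeBoundary.1 hx n, rfl⟩, treeProj_descTree_take_nonempty hx n,
    ⟨_, hsim, hsub⟩,
    (IsSimilarity.le_dimH_image hsim _).trans (dimH_mono (hsub.trans inter_subset_left))⟩

theorem stmt13 {d : ℕ} {Λ : Type} [Fintype Λ] [Nonempty Λ]
    (Φ : Λ → Euc d → Euc d) (r : Λ → ℝ)
    (hΦ : ∀ i, IsContractingSimilarity (Φ i) (r i))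
    (S : Set (List Λ)) (hS : IsTree S) (hSnl : HasNoLeaves S) :
    ∀ M : Set (Euc d), IsMiniset (treeProj Φ S) M →
      (M ∩ interior (unitCube d)).Nonempty →
      ∃ F : Set (Euc d), F ∈ branchSets Φ S ∧ F.Nonempty ∧
        (∃ ψ : Euc d → Euc d, IsSimilarity ψ ∧ ψ '' F ⊆ M ∩ interior (unitCube d)) ∧
        dimH F ≤ dimH M :=
  stmt13_general Φ r hΦ S hS
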